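/- In a linear–Gaussian model where T ⊥ N | M (equivalently Σ_NT = Σ_NM Σ_MM^{-1} Σ_MT), the global whitened CCA operator Ω_X = Σ_XX^{-1/2} Σ_XT Σ_TT^{-1} Σ_TX Σ_XX^{-1/2} and the Markov-blanket operator Ω_M = Σ_MM^{-1/2} Σ_MT Σ_TT^{-1} Σ_TM Σ_MM^{-1/2} have the same nonzero eigenvalues, and every eigenvector of Ω_M with nonzero eigenvalue lifts to an eigenvector of Ω_X with the same eigenvalue via v_X = Q v_M with Q = Σ_XX^{-1/2} L Σ_MM^{1/2}. -/

import Mathlib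

/-!
Conditional independence says exactly that `Σ_XT = L Σ_MT`, so `C_X = Q C_M`. Since
`Σ_XX L = [Σ_MM; Σ_NM]` we get `Σ_XX⁻¹ L = [Σ_MM⁻¹; 0]`, hence `Lᴴ Σ_XX⁻¹ L = Σ_MM⁻¹` and `Q` is an
isometry: `Qᴴ Q = 1`. Therefore `Ω_X = Q Ω_M Qᴴ`, which has the same nonzero eigenvalues as
`Ω_M Qᴴ Q = Ω_M` (`AB` versus `BA`), and `Ω_X Q = Q Ω_M` lifts the eigenvectors.
-/

open Matrix Polynomial

/-- The positive semidefinite square root of a positive semidefinite matrix (the definition of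
Mathlib of December 2024, removed since). -/
noncomputable def Matrix.PosSemidef.sqrt {n : Type*} [Fintype n] [DecidableEq n]
    {A : Matrix n n ℝ} (hA : A.PosSemidef) : Matrix n n ℝ :=
  hA.1.eigenvectorUnitary * diagonal ((√·) ∘ hA.1.eigenvalues) *
    (star hA.1.eigenvectorUnitary : Matrix n n ℝ)

namespace Matrix

section Sqrt

variable {n : Type*} [Fintype n] [DecidableEq n]

lemma PosSemidef.isHermitian_sqrt {A : Matrix n n ℝ} (hA : A.PosSemidef) :
    hA.sqrt.IsHermitian :=
  ((posSemidef_diagonal_iff.mpr fun _ => Real.sqrt_nonneg _).mul_mul_conjTranspose_same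
    hA.1.eigenvectorUnitary.1).isHermitian

lemma PosSemidef.sqrt_mul_self {A : Matrix n n ℝ} (hA : A.PosSemidef) :
    hA.sqrt * hA.sqrt = A := by
  set U : Matrix n n ℝ := (hA.1.eigenvectorUnitary : Matrix n n ℝ)
  set D := diagonal ((√·) ∘ hA.1.eigenvalues)
  have hU : star U * U = 1 := Unitary.coe_star_mul_self _
  have hD : D * D = diagonal hA.1.eigenvalues := by
    rw [diagonal_mul_diagonal]
    exact congrArg diagonal (funext fun i => Real.mul_self_sqrt (hA.eigenvalues_nonneg i))
  calc hA.sqrt * hA.sqrt = U * (D * (star U * U) * D) * star U := by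
        simp only [PosSemidef.sqrt, U, D, Matrix.mul_assoc]
    _ = A := by
      rw [hU, Matrix.mul_one, hD]
      conv_rhs => rw [hA.1.spectral_theorem]
      simp [U]

lemma PosDef.isUnit_det_sqrt {A : Matrix n n ℝ} (hA : A.PosDef) :
    IsUnit hA.posSemidef.sqrt.det := by
  have h := congrArg det hA.posSemidef.sqrt_mul_self
  rw [det_mul] at h
  exact isUnit_iff_ne_zero.mpr fun h0 => hA.det_pos.ne' (by rw [← h, h0, zero_mul])

end Sqrt

lemma IsHermitian.roots_charpoly_eq_eigenvalues_real {n : Type*} [Fintype n] [DecidableEq n]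
    {A : Matrix n n ℝ} (hA : A.IsHermitian) :
    A.charpoly.roots = Multiset.map hA.eigenvalues Finset.univ.val := by
  simpa using hA.roots_charpoly_eq_eigenvalues

section Spectrum

variable {m n R : Type*} [Fintype m] [Fintype n] [DecidableEq m] [DecidableEq n]
  [CommRing R] [IsDomain R] [DecidableEq R]

lemma filter_roots_charpoly_mul_comm (A : Matrix m n R) (B : Matrix n m R) :
    (A * B).charpoly.roots.filter (· ≠ 0) = (B * A).charpoly.roots.filter (· ≠ 0) := by
  have h := congrArg roots (charpoly_mul_comm' A B)
  rw [roots_mul (mul_ne_zero (pow_ne_zero _ X_ne_zero) (charpoly_monic _).ne_zero),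
    roots_mul (mul_ne_zero (pow_ne_zero _ X_ne_zero) (charpoly_monic _).ne_zero),
    roots_X_pow, roots_X_pow] at h
  simpa [Multiset.filter_add, Multiset.filter_nsmul, Multiset.filter_singleton] using
    congrArg (Multiset.filter (· ≠ 0)) h

lemma filter_roots_charpoly_mul_mul_conjTranspose [StarRing R] {Q : Matrix m n R}
    (hQ : Qᴴ * Q = 1) (A : Matrix n n R) :
    (Q * A * Qᴴ).charpoly.roots.filter (· ≠ 0) = A.charpoly.roots.filter (· ≠ 0) := by
  rw [Matrix.mul_assoc, filter_roots_charpoly_mul_comm, Matrix.mul_assoc, hQ, Matrix.mul_one]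

end Spectrum

lemma mul_mul_conjTranspose_mulVec_mulVec {m n R : Type*} [Fintype m] [Fintype n]
    [DecidableEq n] [CommRing R] [StarRing R] {Q : Matrix m n R} (hQ : Qᴴ * Q = 1)
    {A : Matrix n n R} {μ : R} {v : n → R} (hv : A *ᵥ v = μ • v) :
    (Q * A * Qᴴ) *ᵥ (Q *ᵥ v) = μ • (Q *ᵥ v) := by
  rw [mulVec_mulVec, Matrix.mul_assoc (Q * A), hQ, Matrix.mul_one, ← mulVec_mulVec, hv,
    mulVec_smul]

section Blocks

variable {m n R : Type*} [Fintype m] [Fintype n] [DecidableEq m] [DecidableEq n]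
  [CommRing R]

lemma inv_fromBlocks_mul_fromRows_one {A : Matrix m m R} {B : Matrix m n R}
    {C : Matrix n m R} {D : Matrix n n R} (hX : IsUnit (fromBlocks A B C D).det)
    (hA : IsUnit A.det) :
    (fromBlocks A B C D)⁻¹ * fromRows (1 : Matrix m m R) (C * A⁻¹) =
      fromRows A⁻¹ (0 : Matrix n m R) := by
  have h : fromBlocks A B C D * fromRows A⁻¹ (0 : Matrix n m R) =
      fromRows (1 : Matrix m m R) (C * A⁻¹) := by
    rw [fromBlocks_mul_fromRows, Matrix.mul_zero, Matrix.mul_zero, add_zero, add_zero,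
      mul_nonsing_inv _ hA]
  rw [← h, ← Matrix.mul_assoc, nonsing_inv_mul _ hX, Matrix.one_mul]

lemma conjTranspose_fromRows_mul_inv_fromBlocks_mul_fromRows [StarRing R] {A : Matrix m m R}
    {B : Matrix m n R} {C : Matrix n m R} {D : Matrix n n R}
    (hX : IsUnit (fromBlocks A B C D).det) (hA : IsUnit A.det) :
    (fromRows (1 : Matrix m m R) (C * A⁻¹))ᴴ * (fromBlocks A B C D)⁻¹ *
      fromRows (1 : Matrix m m R) (C * A⁻¹) = A⁻¹ := by
  rw [Matrix.mul_assoc, inv_fromBlocks_mul_fromRows_one hX hA,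
    conjTranspose_fromRows_eq_fromCols_conjTranspose, fromCols_mul_fromRows]
  simp

end Blocks

lemma PosDef.conjTranspose_mul_self_inv_sqrt_mul_mul_sqrt_eq_one {m n : Type*}
    [Fintype m] [Fintype n] [DecidableEq m] [DecidableEq n] {X : Matrix n n ℝ} {M : Matrix m m ℝ}
    (hX : X.PosDef) (hM : M.PosDef) {L : Matrix n m ℝ} (hL : Lᴴ * X⁻¹ * L = M⁻¹) :
    (hX.posSemidef.sqrt⁻¹ * L * hM.posSemidef.sqrt)ᴴ *
      (hX.posSemidef.sqrt⁻¹ * L * hM.posSemidef.sqrt) = 1 := by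
  set RX := hX.posSemidef.sqrt
  set RM := hM.posSemidef.sqrt
  have hRX : RX⁻¹ * RX⁻¹ = X⁻¹ := by rw [← Matrix.mul_inv_rev, hX.posSemidef.sqrt_mul_self]
  have hRM : RM⁻¹ * RM⁻¹ = M⁻¹ := by rw [← Matrix.mul_inv_rev, hM.posSemidef.sqrt_mul_self]
  have hRXh : RX⁻¹ᴴ = RX⁻¹ := by
    rw [conjTranspose_nonsing_inv, hX.posSemidef.isHermitian_sqrt.eq]
  have hRMh : RMᴴ = RM := hM.posSemidef.isHermitian_sqrt.eq
  calc (RX⁻¹ * L * RM)ᴴ * (RX⁻¹ * L * RM) = RM * (Lᴴ * (RX⁻¹ * RX⁻¹) * L) * RM := by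
        rw [conjTranspose_mul, conjTranspose_mul, hRXh, hRMh]
        simp only [Matrix.mul_assoc]
    _ = (RM * RM⁻¹) * (RM⁻¹ * RM) := by rw [hRX, hL, ← hRM]; simp only [Matrix.mul_assoc]
    _ = 1 := by
      rw [mul_nonsing_inv _ hM.isUnit_det_sqrt, nonsing_inv_mul _ hM.isUnit_det_sqrt,
        Matrix.one_mul]

end Matrix

/-- In a linear–Gaussian model where `T ⊥ N | M`
(equivalently `Σ_NT = Σ_NM Σ_MM⁻¹ Σ_MT`), the global whitened CCA operator
`Ω_X = Σ_XX^{-1/2} Σ_XT Σ_TT⁻¹ Σ_TX Σ_XX^{-1/2}` (written below as `C_X C_Xᴴ` with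
`C_X = Σ_XX^{-1/2} Σ_XT Σ_TT^{-1/2}`) and the Markov-blanket operator
`Ω_M = Σ_MM^{-1/2} Σ_MT Σ_TT⁻¹ Σ_TM Σ_MM^{-1/2}` have the same nonzero eigenvalues (with
multiplicity), and every eigenvector `v` of `Ω_M` with nonzero eigenvalue lifts to an eigenvector
of `Ω_X` with the same eigenvalue via `v_X = Q v` with `Q = Σ_XX^{-1/2} L Σ_MM^{1/2}`,
`L = [I; Σ_NM Σ_MM⁻¹]`. -/
theorem stmt4 {m n k : ℕ}
    (SMM : Matrix (Fin m) (Fin m) ℝ) (SMN : Matrix (Fin m) (Fin n) ℝ)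
    (SNM : Matrix (Fin n) (Fin m) ℝ) (SNN : Matrix (Fin n) (Fin n) ℝ)
    (SMT : Matrix (Fin m) (Fin k) ℝ) (SNT : Matrix (Fin n) (Fin k) ℝ)
    (STT : Matrix (Fin k) (Fin k) ℝ)
    (hXX : (Matrix.fromBlocks SMM SMN SNM SNN).PosDef)
    (hMM : SMM.PosDef) (hTT : STT.PosDef)
    (hCI : SNT = SNM * SMM⁻¹ * SMT) :
    let CX := (hXX.posSemidef.sqrt)⁻¹ * Matrix.fromRows SMT SNT * (hTT.posSemidef.sqrt)⁻¹
    let CM := (hMM.posSemidef.sqrt)⁻¹ * SMT * (hTT.posSemidef.sqrt)⁻¹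
    let Q := (hXX.posSemidef.sqrt)⁻¹ *
      Matrix.fromRows (1 : Matrix (Fin m) (Fin m) ℝ) (SNM * SMM⁻¹) * hMM.posSemidef.sqrt
    (Multiset.filter (fun x => x ≠ 0)
        (Multiset.map (Matrix.isHermitian_mul_conjTranspose_self CX).eigenvalues
          Finset.univ.val)) =
      (Multiset.filter (fun x => x ≠ 0)
        (Multiset.map (Matrix.isHermitian_mul_conjTranspose_self CM).eigenvalues
          Finset.univ.val)) ∧
    ∀ μ : ℝ, μ ≠ 0 → ∀ v : Fin m → ℝ,
      (CM * CMᴴ) *ᵥ v = μ • v → (CX * CXᴴ) *ᵥ (Q *ᵥ v) = μ • (Q *ᵥ v) := by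
  intro CX CM Q
  have hQ : Qᴴ * Q = 1 :=
    PosDef.conjTranspose_mul_self_inv_sqrt_mul_mul_sqrt_eq_one hXX hMM
      (conjTranspose_fromRows_mul_inv_fromBlocks_mul_fromRows
        (isUnit_iff_ne_zero.mpr hXX.det_pos.ne') (isUnit_iff_ne_zero.mpr hMM.det_pos.ne'))
  have hCX : CX = Q * CM := by
    have hLS :
        fromRows (1 : Matrix (Fin m) (Fin m) ℝ) (SNM * SMM⁻¹) * SMT = fromRows SMT SNT := by
      rw [fromRows_mul, Matrix.one_mul, hCI]
    simp only [CX, CM, Q, ← hLS, Matrix.mul_assoc,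
      mul_nonsing_inv_cancel_left _ _ hMM.isUnit_det_sqrt]
  have hΩ : CX * CXᴴ = Q * (CM * CMᴴ) * Qᴴ := by
    rw [hCX, conjTranspose_mul]
    simp only [Matrix.mul_assoc]
  refine ⟨?_, fun μ _ v hv => hΩ ▸ mul_mul_conjTranspose_mulVec_mulVec hQ hv⟩
  rw [← IsHermitian.roots_charpoly_eq_eigenvalues_real,
    ← IsHermitian.roots_charpoly_eq_eigenvalues_real,
    hΩ, filter_roots_charpoly_mul_mul_conjTranspose hQ]
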